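/- arXiv:1606.01969 — 6 statements merged into one kernel-verified Lean document; each statement's English description precedes it below -/
import Mathlib

section
/- Let $B_1, B_2, \ldots$ be independent Bernoulli random variables with $B_i \sim \mathrm{Bernoulli}(p_i)$. Then for any positive integer $r$ and any real $\nu > 0$, $\mathbb{P}\left(\sup_{k \ge r} \left|\frac{1}{k}\sum_{i=1}^{k}(B_i - p_i)\right| > \nu\right) \le \left(2 + \frac{4}{\nu^2}\right) e^{-r\nu^2/2}$. -/
open MeasureTheory ProbabilityTheory Real Finset
open scoped NNReal

/-!
Each centred variable `B i - p i` takes values in an interval of length one, so by Hoeffding's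
lemma it is sub-Gaussian with variance proxy `1/4`, and Hoeffding's inequality bounds the
probability that the `k`-th sample mean deviates by more than `ν` by `2 e^{-2kν²} ≤ 2 e^{-kν²/2}`.
A union bound over `k ≥ r` turns these into a geometric series with ratio `q = e^{-ν²/2}`, and
`1 / (1 - e^{-a}) ≤ 1 + 1/a` for `a = ν²/2` gives the constant `2 + 4/ν²`.
-/

lemma inv_one_sub_exp_neg_le {a : ℝ} (ha : 0 < a) : (1 - exp (-a))⁻¹ ≤ 1 + a⁻¹ := by
  have h_exp : exp (-a) ≤ (1 + a)⁻¹ := by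
    rw [exp_neg]
    exact inv_anti₀ (by positivity) (by linarith [add_one_le_exp a])
  have h_inv : (1 + a⁻¹)⁻¹ = 1 - (1 + a)⁻¹ := by
    field_simp
    ring
  rw [inv_le_comm₀ (by linarith [exp_lt_one_iff.mpr (neg_lt_zero.mpr ha)]) (by positivity), h_inv]
  linarith

section

variable {Ω : Type*} [MeasurableSpace Ω] {μ : Measure Ω}

lemma measure_exists_ge_le_of_le_exp_mul {A : ℕ → Set Ω} {C a : ℝ} (hC : 0 ≤ C) (ha : 0 < a)
    (hA : ∀ k : ℕ, μ (A k) ≤ ENNReal.ofReal (C * exp (-(k * a)))) (r : ℕ) :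
    μ {ω | ∃ k, r ≤ k ∧ ω ∈ A k} ≤ ENNReal.ofReal (C * (1 + a⁻¹) * exp (-(r * a))) := by
  set q := exp (-a)
  have hq0 : 0 ≤ q := (exp_pos _).le
  have hq1 : q < 1 := exp_lt_one_iff.mpr (neg_lt_zero.mpr ha)
  have h_shift : ∀ j : ℕ, C * exp (-((r + j : ℕ) * a)) = C * exp (-(r * a)) * q ^ j := by
    intro j
    rw [← exp_nat_mul, mul_assoc, ← exp_add]
    push_cast
    ring_nf
  calc μ {ω | ∃ k, r ≤ k ∧ ω ∈ A k}
      ≤ μ (⋃ j : ℕ, A (r + j)) := by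
        refine measure_mono fun ω ⟨k, hk, hω⟩ ↦ Set.mem_iUnion.mpr ⟨k - r, ?_⟩
        rwa [Nat.add_sub_cancel' hk]
    _ ≤ ∑' j : ℕ, μ (A (r + j)) := measure_iUnion_le _
    _ ≤ ∑' j : ℕ, ENNReal.ofReal (C * exp (-(r * a)) * q ^ j) :=
        ENNReal.tsum_le_tsum fun j ↦ (hA (r + j)).trans_eq (by rw [h_shift])
    _ = ENNReal.ofReal (∑' j : ℕ, C * exp (-(r * a)) * q ^ j) :=
        (ENNReal.ofReal_tsum_of_nonneg (fun j ↦ by positivity)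
          ((summable_geometric_of_lt_one hq0 hq1).mul_left _)).symm
    _ = ENNReal.ofReal (C * exp (-(r * a)) * (1 - q)⁻¹) := by
        rw [tsum_mul_left, tsum_geometric_of_lt_one hq0 hq1]
    _ ≤ ENNReal.ofReal (C * (1 + a⁻¹) * exp (-(r * a))) := by
        rw [mul_right_comm]
        gcongr
        exact inv_one_sub_exp_neg_le ha

lemma integral_eq_measureReal_of_eq_zero_or_one {f : Ω → ℝ} (hf : Measurable f)
    (h01 : ∀ ω, f ω = 0 ∨ f ω = 1) :
    ∫ ω, f ω ∂μ = μ.real {ω | f ω = 1} := by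
  have hf_eq : f = {ω | f ω = 1}.indicator 1 := by
    funext ω
    rcases h01 ω with h | h <;> simp [h]
  conv_lhs => rw [hf_eq]
  exact integral_indicator_one (hf (measurableSet_singleton 1))

lemma hasSubgaussianMGF_sub_measureReal_of_eq_zero_or_one [IsProbabilityMeasure μ] {f : Ω → ℝ}
    (hf : Measurable f) (h01 : ∀ ω, f ω = 0 ∨ f ω = 1) :
    HasSubgaussianMGF (fun ω ↦ f ω - μ.real {ω | f ω = 1}) (1 / 4) μ := by
  have h := hasSubgaussianMGF_of_mem_Icc (μ := μ) (a := 0) (b := 1) hf.aemeasurable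
    (ae_of_all _ fun ω ↦ by rcases h01 ω with h | h <;> simp [h])
  rw [integral_eq_measureReal_of_eq_zero_or_one hf h01] at h
  convert h using 1
  norm_num

lemma measure_le_abs_sum_range_le_of_iIndepFun [IsFiniteMeasure μ] {X : ℕ → Ω → ℝ}
    (h_indep : iIndepFun X μ) {c : ℝ≥0} {n : ℕ} (h_subG : ∀ i < n, HasSubgaussianMGF (X i) c μ)
    {ε : ℝ} (hε : 0 ≤ ε) :
    μ {ω | ε ≤ |∑ i ∈ range n, X i ω|} ≤ ENNReal.ofReal (2 * exp (-ε ^ 2 / (2 * n * c))) := by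
  have h_upper := HasSubgaussianMGF.measure_sum_range_ge_le_of_iIndepFun h_indep h_subG hε
  have h_lower : μ.real {ω | ε ≤ ∑ i ∈ range n, -X i ω} ≤ exp (-ε ^ 2 / (2 * n * c)) :=
    HasSubgaussianMGF.measure_sum_range_ge_le_of_iIndepFun
      (h_indep.comp (fun _ x ↦ -x) fun _ ↦ measurable_neg) (fun i hi ↦ (h_subG i hi).neg) hε
  have h_sub : {ω | ε ≤ |∑ i ∈ range n, X i ω|}
      ⊆ {ω | ε ≤ ∑ i ∈ range n, X i ω} ∪ {ω | ε ≤ ∑ i ∈ range n, -X i ω} := by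
    intro ω hω
    rw [Set.mem_ofPred_eq, le_abs] at hω
    simpa only [Set.mem_union, Set.mem_ofPred_eq, sum_neg_distrib] using hω
  calc μ {ω | ε ≤ |∑ i ∈ range n, X i ω|}
      ≤ μ {ω | ε ≤ ∑ i ∈ range n, X i ω} + μ {ω | ε ≤ ∑ i ∈ range n, -X i ω} :=
        (measure_mono h_sub).trans (measure_union_le _ _)
    _ ≤ ENNReal.ofReal (exp (-ε ^ 2 / (2 * n * c)))
          + ENNReal.ofReal (exp (-ε ^ 2 / (2 * n * c))) := by
        rw [← ofReal_measureReal, ← ofReal_measureReal]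
        gcongr
    _ = ENNReal.ofReal (2 * exp (-ε ^ 2 / (2 * n * c))) := by
        rw [← ENNReal.ofReal_add (by positivity) (by positivity), ← two_mul]

lemma measure_lt_abs_sum_range_div_le_of_iIndepFun [IsFiniteMeasure μ] {X : ℕ → Ω → ℝ}
    (h_indep : iIndepFun X μ) {c : ℝ≥0} {n : ℕ} (h_subG : ∀ i < n, HasSubgaussianMGF (X i) c μ)
    {ε : ℝ} (hε : 0 ≤ ε) :
    μ {ω | ε < |(∑ i ∈ range n, X i ω) / n|}
      ≤ ENNReal.ofReal (2 * exp (-(n * ε ^ 2) / (2 * c))) := by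
  have h_sub : {ω | ε < |(∑ i ∈ range n, X i ω) / n|}
      ⊆ {ω | n * ε ≤ |∑ i ∈ range n, X i ω|} := by
    intro ω hω
    rcases n.eq_zero_or_pos with rfl | hn
    · -- the empty mean is `0 / 0 = 0`
      simp only [Set.mem_ofPred_eq, Nat.cast_zero, div_zero, abs_zero] at hω
      linarith
    · rw [Set.mem_ofPred_eq, abs_div, Nat.abs_cast, lt_div_iff₀ (by exact_mod_cast hn)] at hω
      exact (mul_comm ε n ▸ hω).le
  refine (measure_mono h_sub).trans ((measure_le_abs_sum_range_le_of_iIndepFun h_indep h_subG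
    (by positivity)).trans_eq ?_)
  rcases n.eq_zero_or_pos with rfl | hn
  · simp
  · congr 3
    field_simp

end

theorem bernoulli_maximal_inequality_general {Ω : Type*} [MeasurableSpace Ω]
    (μ : Measure Ω) [IsProbabilityMeasure μ]
    (B : ℕ → Ω → ℝ) (p : ℕ → ℝ)
    (hmeas : ∀ i, Measurable (B i))
    (hp : ∀ i, p i ∈ Set.Icc (0 : ℝ) 1)
    (hval : ∀ i ω, B i ω = 0 ∨ B i ω = 1)
    (hbern : ∀ i, μ {ω | B i ω = 1} = ENNReal.ofReal (p i))
    (hindep : iIndepFun B μ)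
    (r : ℕ) (ν : ℝ) (hν : 0 < ν) :
    μ {ω | ∃ k : ℕ, r ≤ k ∧
        ν < |(∑ i ∈ Finset.range k, (B i ω - p i)) / k|}
      ≤ ENNReal.ofReal ((2 + 4 / ν ^ 2) * Real.exp (-(r : ℝ) * ν ^ 2 / 2)) := by
  have h_subG : ∀ i, HasSubgaussianMGF (fun ω ↦ B i ω - p i) (1 / 4) μ := fun i ↦ by
    simpa [measureReal_def, hbern i, ENNReal.toReal_ofReal (hp i).1] using
      hasSubgaussianMGF_sub_measureReal_of_eq_zero_or_one (μ := μ) (hmeas i) (hval i)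
  have h_indep : iIndepFun (fun i ω ↦ B i ω - p i) μ :=
    hindep.comp (fun i x ↦ x - p i) fun _ ↦ measurable_id.sub_const _
  have h_tail : ∀ k : ℕ, μ {ω | ν < |(∑ i ∈ Finset.range k, (B i ω - p i)) / k|}
      ≤ ENNReal.ofReal (2 * exp (-(k * (ν ^ 2 / 2)))) := fun k ↦
    (measure_lt_abs_sum_range_div_le_of_iIndepFun h_indep (fun i _ ↦ h_subG i) hν.le).trans
      (ENNReal.ofReal_le_ofReal (by
        gcongr
        norm_num
        linarith [mul_nonneg (Nat.cast_nonneg (α := ℝ) k) (sq_nonneg ν)]))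
  calc _ ≤ ENNReal.ofReal (2 * (1 + (ν ^ 2 / 2)⁻¹) * exp (-(r * (ν ^ 2 / 2)))) :=
        measure_exists_ge_le_of_le_exp_mul zero_le_two (by positivity) h_tail r
    _ = _ := by
        congr 1
        field_simp
        ring_nf

/-- Maximal concentration inequality for independent Bernoulli variables: if
`B i ~ Bernoulli(p i)` are independent, then for any positive integer `r` and `ν > 0`,
`P(sup_{k ≥ r} |(1/k) ∑_{i=1}^k (B i - p i)| > ν) ≤ (2 + 4/ν²) e^{-rν²/2}`. -/
theorem bernoulli_maximal_inequality {Ω : Type*} [MeasurableSpace Ω]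
    (μ : Measure Ω) [IsProbabilityMeasure μ]
    (B : ℕ → Ω → ℝ) (p : ℕ → ℝ)
    (hmeas : ∀ i, Measurable (B i))
    (hp : ∀ i, p i ∈ Set.Icc (0 : ℝ) 1)
    (hval : ∀ i ω, B i ω = 0 ∨ B i ω = 1)
    (hbern : ∀ i, μ {ω | B i ω = 1} = ENNReal.ofReal (p i))
    (hindep : iIndepFun B μ)
    (r : ℕ) (hr : 0 < r) (ν : ℝ) (hν : 0 < ν) :
    μ {ω | ∃ k : ℕ, r ≤ k ∧
        ν < |(∑ i ∈ Finset.range k, (B i ω - p i)) / k|}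
      ≤ ENNReal.ofReal ((2 + 4 / ν ^ 2) * Real.exp (-(r : ℝ) * ν ^ 2 / 2)) :=
  bernoulli_maximal_inequality_general μ B p hmeas hp hval hbern hindep r ν hν
end

section
/- For each $n$, let $B_1^{(n)}, \ldots, B_n^{(n)}$ be independent Bernoulli random variables with $B_i^{(n)} \sim \mathrm{Bernoulli}(\pi(i/n))$, where $\pi: [0,1] \to [0,1]$ is Lipschitz, and let $\Pi(t) = \frac{1}{t}\int_0^t \pi(u)\,du$. Set $a_n = \lceil (\log n)^2 \rceil$ and $\epsilon_n = 1/\sqrt{\log n}$. Then $\mathbb{P}\left(\max_{a_n \le k \le n} \left|\frac{1}{k}\sum_{i=1}^k B_i^{(n)} - \Pi\left(\frac{k}{n}\right)\right| \le \epsilon_n\right) \to 1$ as $n \to \infty$. -/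
/-!
Fix `n` and write `ℓ = log n`, `ε = 1 / √ℓ`. Since `π` is `K`-Lipschitz, the right Riemann
mean `(1/k) ∑_{i ≤ k} π(i/n)` lies within `K/n ≤ ε/2` of `Π(k/n)`, and this Riemann mean is the
expectation of `(1/k) ∑_{i ≤ k} Bᵢ`. Hoeffding's inequality therefore bounds the probability of
a deviation larger than `ε` at a given `k` by `2 exp(-k ε²/2)`. Summing this geometric series
over `k ≥ aₙ ≥ ℓ²` bounds the failure probability by `2 e^{-ℓ/2} (1 + 2ℓ)`, which tends to `0`.
-/

open MeasureTheory ProbabilityTheory Filter Real Finset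

lemma sum_Icc_exp_neg_mul_le {c : ℝ} (hc : 0 < c) (a n : ℕ) :
    ∑ k ∈ Icc a n, exp (-(k * c)) ≤ exp (-(a * c)) * (1 + 1 / c) := by
  set r := exp (-c)
  have hr : r < 1 := exp_lt_one_iff.mpr (neg_lt_zero.mpr hc)
  have hpow : ∀ k : ℕ, exp (-(k * c)) = r ^ k := fun k => by
    rw [← exp_nat_mul]; ring_nf
  -- `1 + c ≤ exp c` gives `1 - exp (-c) ≥ c / (1 + c)`
  have hgap : 1 / (1 - r) ≤ 1 + 1 / c := by
    have hr_mul : r * exp c = 1 := by rw [← exp_add]; simp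
    have hlower : c / (1 + c) ≤ 1 - r := by
      rw [div_le_iff₀ (by linarith)]; nlinarith [add_one_le_exp c, exp_pos (-c)]
    calc 1 / (1 - r) ≤ 1 / (c / (1 + c)) := one_div_le_one_div_of_le (by positivity) hlower
      _ = 1 + 1 / c := by field_simp; ring
  simp_rw [hpow]
  calc ∑ k ∈ Icc a n, r ^ k = ∑ k ∈ Ico a (n + 1), r ^ k := rfl
    _ ≤ r ^ a / (1 - r) := geom_sum_Ico_le_of_lt_one (exp_pos _).le hr
    _ ≤ r ^ a * (1 + 1 / c) := by
      rw [div_eq_mul_one_div]; gcongr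

lemma tendsto_two_mul_exp_neg_half_mul_one_add_two_mul :
    Tendsto (fun ℓ : ℝ => 2 * exp (-(ℓ / 2)) * (1 + 2 * ℓ)) atTop (nhds 0) := by
  have h := ((tendsto_pow_mul_exp_neg_atTop_nhds_zero 0).const_mul 2 |>.add
    ((tendsto_pow_mul_exp_neg_atTop_nhds_zero 1).const_mul 8)).comp
    (tendsto_id.atTop_div_const (r := 2) two_pos)
  simp only [mul_zero, add_zero] at h
  refine h.congr fun ℓ => ?_
  simp only [Function.comp_apply, id_eq]
  ring

lemma eventually_mul_sqrt_log_le (C : ℝ) : ∀ᶠ x : ℝ in atTop, C * √(log x) ≤ x := by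
  filter_upwards [isLittleO_log_id_atTop.bound (c := 1 / (|C| + 1)) (by positivity),
    tendsto_log_atTop.eventually_ge_atTop 1, eventually_ge_atTop 0] with x hlog h1 hx
  rw [norm_of_nonneg (by linarith), id_eq, norm_of_nonneg hx, div_mul_eq_mul_div, one_mul,
    le_div_iff₀ (by positivity)] at hlog
  have hsqrt : √(log x) ≤ log x := by
    rw [sqrt_le_left (by linarith)]; nlinarith
  calc C * √(log x) ≤ |C| * log x :=
        (mul_le_mul_of_nonneg_right (le_abs_self C) (sqrt_nonneg _)).trans
          (mul_le_mul_of_nonneg_left hsqrt (abs_nonneg C))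
    _ ≤ x := by nlinarith

lemma two_mul_exp_neg_ceil_sq_mul_le {ℓ : ℝ} (hℓ : 0 < ℓ) :
    2 * (exp (-(⌈ℓ ^ 2⌉₊ * ((1 / √ℓ) ^ 2 / 2))) * (1 + 1 / ((1 / √ℓ) ^ 2 / 2)))
      ≤ 2 * exp (-(ℓ / 2)) * (1 + 2 * ℓ) := by
  have hε2 : (1 / √ℓ) ^ 2 = 1 / ℓ := by rw [div_pow, sq_sqrt hℓ.le, one_pow]
  have hceil : ℓ / 2 ≤ ⌈ℓ ^ 2⌉₊ * (1 / ℓ / 2) :=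
    calc ℓ / 2 = ℓ ^ 2 * (1 / ℓ / 2) := by field_simp
      _ ≤ ⌈ℓ ^ 2⌉₊ * (1 / ℓ / 2) := by gcongr; exact Nat.le_ceil _
  rw [hε2, show 1 + 1 / (1 / ℓ / 2) = 1 + 2 * ℓ by field_simp, ← mul_assoc]
  gcongr

lemma LipschitzOnWith.abs_mul_apply_right_sub_integral_le {f : ℝ → ℝ} {K : NNReal} {a b : ℝ}
    (hf : LipschitzOnWith K f (Set.Icc a b)) (hab : a ≤ b) :
    |(b - a) * f b - ∫ u in a..b, f u| ≤ K * (b - a) ^ 2 := by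
  have hb : b ∈ Set.Icc a b := ⟨hab, le_rfl⟩
  have hpoint : ∀ u ∈ Set.uIoc a b, ‖f b - f u‖ ≤ K * (b - a) := by
    intro u hu
    rw [Set.uIoc_of_le hab] at hu
    calc ‖f b - f u‖ ≤ K * |b - u| := by
          simpa [Real.dist_eq] using hf.dist_le_mul b hb u (Set.Ioc_subset_Icc_self hu)
      _ ≤ K * (b - a) := by
          rw [abs_of_nonneg (by linarith [hu.2])]
          gcongr
          exact hu.1.le
  calc |(b - a) * f b - ∫ u in a..b, f u|
      = ‖∫ u in a..b, (f b - f u)‖ := by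
        rw [intervalIntegral.integral_sub intervalIntegrable_const
          (hf.continuousOn.intervalIntegrable_of_Icc hab),
          intervalIntegral.integral_const, smul_eq_mul, Real.norm_eq_abs]
    _ ≤ K * (b - a) * |b - a| := intervalIntegral.norm_integral_le_of_norm_le_const hpoint
    _ = K * (b - a) ^ 2 := by rw [abs_of_nonneg (sub_nonneg.2 hab)]; ring

lemma LipschitzOnWith.abs_sum_div_sub_integral_le {f : ℝ → ℝ} {K : NNReal} {n : ℝ} {k : ℕ}
    (hf : LipschitzOnWith K f (Set.Icc 0 (k / n))) (hn : 0 < n) :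
    |(∑ i ∈ Icc 1 k, f (i / n)) / n - ∫ u in 0..k / n, f u| ≤ k * K / n ^ 2 := by
  induction k with
  | zero => simp
  | succ k ih =>
    have h0k : 0 ≤ (k : ℝ) / n := by positivity
    have hk : (k : ℝ) / n ≤ (k + 1 : ℕ) / n := by gcongr; simp
    have hf₁ := hf.mono (Set.Icc_subset_Icc_right hk)
    have hf₂ := hf.mono (Set.Icc_subset_Icc_left h0k)
    have hstep := hf₂.abs_mul_apply_right_sub_integral_le hk
    have hwidth : ((k + 1 : ℕ) : ℝ) / n - k / n = 1 / n := by push_cast; ring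
    rw [hwidth] at hstep
    rw [sum_Icc_succ_top (by omega), ← intervalIntegral.integral_add_adjacent_intervals
      (hf₁.continuousOn.intervalIntegrable_of_Icc h0k)
      (hf₂.continuousOn.intervalIntegrable_of_Icc hk)]
    calc |(∑ i ∈ Icc 1 k, f (i / n) + f ((k + 1 : ℕ) / n)) / n
          - ((∫ u in 0..k / n, f u) + ∫ u in k / n..(k + 1 : ℕ) / n, f u)|
        = |((∑ i ∈ Icc 1 k, f (i / n)) / n - ∫ u in 0..k / n, f u)
          + (1 / n * f ((k + 1 : ℕ) / n) - ∫ u in k / n..(k + 1 : ℕ) / n, f u)| := by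
          congr 1; ring
      _ ≤ k * K / n ^ 2 + K * (1 / n) ^ 2 := (abs_add_le _ _).trans (add_le_add (ih hf₁) hstep)
      _ = (k + 1 : ℕ) * K / n ^ 2 := by push_cast; ring

lemma LipschitzOnWith.abs_average_sub_integral_average_le {f : ℝ → ℝ} {K : NNReal} {n : ℝ}
    {k : ℕ} (hf : LipschitzOnWith K f (Set.Icc 0 (k / n))) (hn : 0 < n) (hk : 0 < k) :
    |(∑ i ∈ Icc 1 k, f (i / n)) / k - (∫ u in 0..k / n, f u) / (k / n)| ≤ K / n := by
  have hk' : (0 : ℝ) < k := by exact_mod_cast hk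
  calc |(∑ i ∈ Icc 1 k, f (i / n)) / k - (∫ u in 0..k / n, f u) / (k / n)|
      = |n / k * ((∑ i ∈ Icc 1 k, f (i / n)) / n - ∫ u in 0..k / n, f u)| := by
        congr 1; field_simp
    _ = n / k * |(∑ i ∈ Icc 1 k, f (i / n)) / n - ∫ u in 0..k / n, f u| := by
        rw [abs_mul, abs_of_pos (div_pos hn hk')]
    _ ≤ n / k * (k * K / n ^ 2) := by gcongr; exact hf.abs_sum_div_sub_integral_le hn
    _ = K / n := by field_simp

section

variable {Ω : Type*} [MeasurableSpace Ω] {μ : Measure Ω}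

lemma integral_eq_of_forall_eq_zero_or_eq_one {X : Ω → ℝ} (hX : Measurable X)
    (hval : ∀ ω, X ω = 0 ∨ X ω = 1) {p : ℝ} (hp : 0 ≤ p)
    (hprob : μ {ω | X ω = 1} = ENNReal.ofReal p) : μ[X] = p := by
  have hind : X = {ω | X ω = 1}.indicator 1 := by
    funext ω
    rcases hval ω with h | h <;> simp [h]
  nth_rewrite 1 [hind]
  rw [integral_indicator_one (s := {ω | X ω = 1}) (hX (measurableSet_singleton 1)),
    measureReal_def, hprob, ENNReal.toReal_ofReal hp]

lemma tendsto_measure_of_tendsto_measure_compl [IsProbabilityMeasure μ] {ι : Type*}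
    {l : Filter ι} {s : ι → Set Ω} (h : Tendsto (fun i => μ (s i)ᶜ) l (nhds 0)) :
    Tendsto (fun i => μ (s i)) l (nhds 1) := by
  have hlower : Tendsto (fun i => 1 - μ (s i)ᶜ) l (nhds 1) := by
    simpa using ENNReal.Tendsto.sub tendsto_const_nhds h (Or.inl ENNReal.one_ne_top)
  refine tendsto_of_tendsto_of_tendsto_of_le_of_le hlower tendsto_const_nhds (fun i => ?_)
    fun i => prob_le_one
  rw [tsub_le_iff_right, ← measure_univ (μ := μ), ← Set.union_compl_self (s i)]
  exact measure_union_le _ _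

lemma measureReal_le_abs_sum_sub_integral_le [IsProbabilityMeasure μ] {ι : Type*}
    {X : ι → Ω → ℝ} (h_indep : iIndepFun X μ) (hmeas : ∀ i, AEMeasurable (X i) μ)
    (hX : ∀ i, ∀ᵐ ω ∂μ, X i ω ∈ Set.Icc 0 1) (s : Finset ι) {t : ℝ} (ht : 0 ≤ t) :
    μ.real {ω | t ≤ |∑ i ∈ s, (X i ω - μ[X i])|} ≤ 2 * exp (-2 * t ^ 2 / #s) := by
  have h_indep' : iIndepFun (fun i ω => X i ω - μ[X i]) μ := by
    exact h_indep.comp (fun i (y : ℝ) => y - μ[X i]) fun _ => measurable_sub_const _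
  have h_subG := HasSubgaussianMGF.sum_of_iIndepFun h_indep' (s := s)
    fun i _ => hasSubgaussianMGF_of_mem_Icc (hmeas i) (hX i)
  have h_exp : -t ^ 2 / (2 * ((∑ i ∈ s, (‖(1 : ℝ) - 0‖₊ / 2) ^ 2 : NNReal) : ℝ))
      = -2 * t ^ 2 / #s := by
    norm_num; field_simp; ring
  have h_upper := h_subG.measure_ge_le ht
  have h_lower := h_subG.neg.measure_ge_le ht
  rw [h_exp] at h_upper h_lower
  calc μ.real {ω | t ≤ |∑ i ∈ s, (X i ω - μ[X i])|}
      ≤ μ.real ({ω | t ≤ ∑ i ∈ s, (X i ω - μ[X i])}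
          ∪ {ω | t ≤ -∑ i ∈ s, (X i ω - μ[X i])}) :=
        measureReal_mono fun ω (hω : t ≤ |_|) => le_abs.mp hω
    _ ≤ 2 * exp (-2 * t ^ 2 / #s) := by
        refine (measureReal_union_le _ _).trans ?_
        simp only [Pi.neg_apply] at h_lower
        linarith

lemma measureReal_lt_abs_average_sub_integral_average_le [IsProbabilityMeasure μ]
    {X : ℕ → Ω → ℝ} (h_indep : iIndepFun X μ) (hmeas : ∀ i, AEMeasurable (X i) μ)
    (hX : ∀ i, ∀ᵐ ω ∂μ, X i ω ∈ Set.Icc 0 1) {f : ℝ → ℝ} {K : NNReal} {n : ℝ} (hn : 0 < n)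
    {k : ℕ} (hk : 0 < k) (hf : LipschitzOnWith K f (Set.Icc 0 (k / n)))
    (hmean : ∀ i ∈ Icc 1 k, μ[X i] = f (i / n)) {ε : ℝ} (hε : 2 * K / n ≤ ε) :
    μ.real {ω | ε < |(∑ i ∈ Icc 1 k, X i ω) / k - (∫ u in 0..k / n, f u) / (k / n)|}
      ≤ 2 * exp (-(k * ε ^ 2 / 2)) := by
  have hk' : (0 : ℝ) < k := by exact_mod_cast hk
  have hbias := hf.abs_average_sub_integral_average_le hn hk
  have hε0 : 0 ≤ ε := le_trans (by positivity) hε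
  -- the mean of the `k` first `X i` is within `K / n ≤ ε / 2` of the integral average
  have hsub : {ω | ε < |(∑ i ∈ Icc 1 k, X i ω) / k - (∫ u in 0..k / n, f u) / (k / n)|}
      ⊆ {ω | k * (ε / 2) ≤ |∑ i ∈ Icc 1 k, (X i ω - μ[X i])|} := by
    intro ω hω
    have hcentered : ∑ i ∈ Icc 1 k, (X i ω - μ[X i])
        = k * ((∑ i ∈ Icc 1 k, X i ω) / k - (∑ i ∈ Icc 1 k, f (i / n)) / k) := by
      rw [sum_sub_distrib, sum_congr rfl hmean]; field_simp
    have htri := abs_sub_le ((∑ i ∈ Icc 1 k, X i ω) / k) ((∑ i ∈ Icc 1 k, f (i / n)) / k)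
      ((∫ u in 0..k / n, f u) / (k / n))
    rw [Set.mem_ofPred_eq] at hω ⊢
    rw [hcentered, abs_mul, abs_of_pos hk']
    have hK : 2 * (K : ℝ) / n = 2 * (K / n) := by ring
    gcongr
    linarith
  calc _ ≤ _ := measureReal_mono hsub
    _ ≤ 2 * exp (-2 * (k * (ε / 2)) ^ 2 / #(Icc 1 k)) :=
        measureReal_le_abs_sum_sub_integral_le h_indep hmeas hX _ (by positivity)
    _ = 2 * exp (-(k * ε ^ 2 / 2)) := by
        rw [Nat.card_Icc, Nat.add_sub_cancel]; field_simp

lemma measure_compl_forall_abs_average_sub_integral_average_le [IsProbabilityMeasure μ]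
    {X : ℕ → Ω → ℝ} (h_indep : iIndepFun X μ) (hmeas : ∀ i, AEMeasurable (X i) μ)
    (hX : ∀ i, ∀ᵐ ω ∂μ, X i ω ∈ Set.Icc 0 1) {f : ℝ → ℝ} {K : NNReal}
    (hf : LipschitzOnWith K f (Set.Icc 0 1)) {n : ℕ}
    (hmean : ∀ i ∈ Icc 1 n, μ[X i] = f (i / n))
    {a : ℕ} (ha : 0 < a) {ε : ℝ} (hε0 : 0 < ε) (hε : 2 * K / n ≤ ε) :
    μ {ω | ∀ k, a ≤ k → k ≤ n →
        |(∑ i ∈ Icc 1 k, X i ω) / k - (∫ u in 0..k / n, f u) / (k / n)| ≤ ε}ᶜ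
      ≤ ENNReal.ofReal (2 * (exp (-(a * (ε ^ 2 / 2))) * (1 + 1 / (ε ^ 2 / 2)))) := by
  have hbad : ∀ k ∈ Icc a n, μ {ω | ε < |(∑ i ∈ Icc 1 k, X i ω) / k
      - (∫ u in 0..k / n, f u) / (k / n)|} ≤ ENNReal.ofReal (2 * exp (-(k * (ε ^ 2 / 2)))) := by
    intro k hk
    obtain ⟨hak, hkn⟩ := mem_Icc.mp hk
    have hn : (0 : ℝ) < n := by exact_mod_cast ha.trans_le (hak.trans hkn)
    have hkn' : (k : ℝ) / n ≤ 1 := (div_le_one hn).mpr (by exact_mod_cast hkn)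
    rw [← mul_div_assoc, ← ofReal_measureReal]
    exact ENNReal.ofReal_le_ofReal <| measureReal_lt_abs_average_sub_integral_average_le
      h_indep hmeas hX hn (ha.trans_le hak) (hf.mono (Set.Icc_subset_Icc_right hkn'))
      (fun i hi => hmean i (Icc_subset_Icc_right hkn hi)) hε
  calc _ ≤ μ (⋃ k ∈ Icc a n, {ω | ε < |(∑ i ∈ Icc 1 k, X i ω) / k
          - (∫ u in 0..k / n, f u) / (k / n)|}) := by
        refine measure_mono fun ω hω => ?_
        simp only [Set.mem_compl_iff, Set.mem_ofPred_eq, not_forall, not_le] at hω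
        obtain ⟨k, hak, hkn, hk⟩ := hω
        exact Set.mem_biUnion (mem_Icc.mpr ⟨hak, hkn⟩) hk
    _ ≤ ∑ k ∈ Icc a n, ENNReal.ofReal (2 * exp (-(k * (ε ^ 2 / 2)))) :=
        (measure_biUnion_finset_le _ _).trans (sum_le_sum hbad)
    _ = ENNReal.ofReal (2 * ∑ k ∈ Icc a n, exp (-(k * (ε ^ 2 / 2)))) := by
        rw [mul_sum, ENNReal.ofReal_sum_of_nonneg fun k _ => by positivity]
    _ ≤ _ := by gcongr; exact sum_Icc_exp_neg_mul_le (by positivity) a n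

end

/-- Uniform law of large numbers for the non-null proportions in the VCT model: if for each
`n` the indicators `B n 1, …, B n n` are independent with `B n i ~ Bernoulli(π(i/n))`,
`π : [0,1] → [0,1]` Lipschitz, `Π(t) = (1/t)∫₀ᵗ π`, `aₙ = ⌈(log n)²⌉`, `εₙ = 1/√(log n)`,
then `P(max_{aₙ ≤ k ≤ n} |(1/k)∑_{i=1}^k B n i - Π(k/n)| ≤ εₙ) → 1`. -/
theorem vct_nonnull_proportion_uniform_lln {Ω : Type*} [MeasurableSpace Ω]
    (μ : Measure Ω) [IsProbabilityMeasure μ]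
    (B : ℕ → ℕ → Ω → ℝ) (pf : ℝ → ℝ) (K : NNReal)
    (hpfmap : ∀ t ∈ Set.Icc (0 : ℝ) 1, pf t ∈ Set.Icc (0 : ℝ) 1)
    (hpflip : LipschitzOnWith K pf (Set.Icc (0 : ℝ) 1))
    (hmeas : ∀ n i, Measurable (B n i))
    (hval : ∀ n i ω, B n i ω = 0 ∨ B n i ω = 1)
    (hbern : ∀ n : ℕ, ∀ i ∈ Finset.Icc 1 n,
      μ {ω | B n i ω = 1} = ENNReal.ofReal (pf ((i : ℝ) / n)))
    (hindep : ∀ n : ℕ, iIndepFun (fun i : ℕ => B n i) μ) :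
    Tendsto (fun n : ℕ =>
      μ {ω | ∀ k : ℕ, ⌈(Real.log n) ^ 2⌉₊ ≤ k → k ≤ n →
        |(∑ i ∈ Finset.Icc 1 k, B n i ω) / k
            - (∫ u in (0 : ℝ)..((k : ℝ) / n), pf u) / ((k : ℝ) / n)|
          ≤ 1 / Real.sqrt (Real.log n)})
      atTop (nhds 1) := by
  have hmean : ∀ n : ℕ, ∀ i ∈ Icc 1 n, μ[B n i] = pf ((i : ℝ) / n) := fun n i hi =>
    integral_eq_of_forall_eq_zero_or_eq_one (hmeas n i) (hval n i) (hpfmap _ ⟨by positivity,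
      div_le_one_of_le₀ (by exact_mod_cast (mem_Icc.mp hi).2) n.cast_nonneg⟩).1 (hbern n i hi)
  have hunit : ∀ n i, ∀ᵐ ω ∂μ, B n i ω ∈ Set.Icc (0 : ℝ) 1 := fun n i =>
    ae_of_all _ fun ω => by rcases hval n i ω with h | h <;> simp [h]
  have hlog : Tendsto (fun n : ℕ => log n) atTop atTop :=
    tendsto_log_atTop.comp tendsto_natCast_atTop_atTop
  have hbound : Tendsto (fun n : ℕ => ENNReal.ofReal (2 * exp (-(log n / 2)) * (1 + 2 * log n)))
      atTop (nhds 0) := by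
    simpa using ENNReal.tendsto_ofReal (tendsto_two_mul_exp_neg_half_mul_one_add_two_mul.comp hlog)
  refine tendsto_measure_of_tendsto_measure_compl <| tendsto_of_tendsto_of_tendsto_of_le_of_le'
    tendsto_const_nhds hbound (Eventually.of_forall fun _ => zero_le) ?_
  filter_upwards [eventually_gt_atTop 0, hlog.eventually_ge_atTop 1,
    tendsto_natCast_atTop_atTop.eventually (eventually_mul_sqrt_log_le (2 * K))] with n hn hℓ hK
  have hsqrt : 0 < √(log n) := sqrt_pos.mpr (by linarith)
  have hε : 2 * K / n ≤ 1 / √(log n) := by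
    rw [div_le_div_iff₀ (Nat.cast_pos.mpr hn) hsqrt]; linarith
  exact (measure_compl_forall_abs_average_sub_integral_average_le (hindep n)
    (fun i => (hmeas n i).aemeasurable) (hunit n) hpflip (hmean n)
    (Nat.ceil_pos.mpr (by positivity)) (one_div_pos.mpr hsqrt) hε).trans
    (ENNReal.ofReal_le_ofReal (two_mul_exp_neg_ceil_sq_mul_le (by linarith)))
end

section
/- Let $X \sim \mathrm{Binomial}(r, p)$ with $r$ a positive integer and $0 \le p < 1$. Then $\mathbb{E}\left[\frac{X}{r + 1 - X}\right] \le \frac{p}{1-p}$. -/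
/-!
Write `b i = C(r,i) p^i (1-p)^(r-i)`. The identity `i C(r,i) = (r+1-i) C(r,i-1)` turns each term
`i / (r+1-i) · b i` into `p / (1-p) · b (i-1)`, so the expectation is `p / (1-p)` times
`P(X < r) = 1 - p^r`.
-/

open MeasureTheory Finset

def binomialProb (r : ℕ) (p : ℝ) (i : ℕ) : ℝ :=
  r.choose i * p ^ i * (1 - p) ^ (r - i)

namespace binomialProb

variable {r : ℕ} {p : ℝ}

lemma nonneg (hp0 : 0 ≤ p) (hp1 : p ≤ 1) (i : ℕ) : 0 ≤ binomialProb r p i := by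
  have : 0 ≤ 1 - p := by linarith
  unfold binomialProb
  positivity

lemma eq_zero_of_lt {i : ℕ} (hi : r < i) : binomialProb r p i = 0 := by
  simp [binomialProb, Nat.choose_eq_zero_of_lt hi]

lemma sum_range_succ_eq_one : ∑ i ∈ range (r + 1), binomialProb r p i = 1 := by
  calc ∑ i ∈ range (r + 1), binomialProb r p i = (p + (1 - p)) ^ r := by
        rw [add_pow]
        exact sum_congr rfl fun i _ => by rw [binomialProb]; ring
    _ = 1 := by simp

lemma sum_range_eq_one_sub_pow : ∑ i ∈ range r, binomialProb r p i = 1 - p ^ r := by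
  have hlast : binomialProb r p r = p ^ r := by simp [binomialProb]
  have htotal := (sum_range_succ_eq_one (r := r) (p := p))
  rw [sum_range_succ, hlast] at htotal
  linarith

lemma succ_div_mul_succ (hp : p ≠ 1) {k : ℕ} (hk : k < r) :
    ((k + 1 : ℕ) : ℝ) / (r + 1 - (k + 1 : ℕ)) * binomialProb r p (k + 1)
      = p / (1 - p) * binomialProb r p k := by
  have hq : 1 - p ≠ 0 := sub_ne_zero.mpr hp.symm
  have hrk : (r : ℝ) + 1 - (k + 1 : ℕ) = (r - k : ℕ) := by
    push_cast [Nat.cast_sub hk.le]; ring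
  have hrk0 : ((r - k : ℕ) : ℝ) ≠ 0 := by
    exact_mod_cast (Nat.sub_pos_of_lt hk).ne'
  have hchoose : (r.choose (k + 1) : ℝ) * (k + 1 : ℕ) = r.choose k * (r - k : ℕ) := by
    exact_mod_cast Nat.choose_succ_right_eq r k
  have hpow : (1 - p) ^ (r - k) = (1 - p) ^ (r - (k + 1)) * (1 - p) := by
    rw [← pow_succ, Nat.sub_add_eq, Nat.sub_add_cancel (Nat.sub_pos_of_lt hk)]
  rw [hrk, binomialProb, binomialProb, hpow]
  field_simp
  linear_combination p * p ^ k * hchoose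

lemma sum_div_mul (hp : p ≠ 1) :
    ∑ i ∈ range (r + 1), (i : ℝ) / (r + 1 - i) * binomialProb r p i
      = p / (1 - p) * (1 - p ^ r) := by
  rw [sum_range_succ', sum_congr rfl fun k hk => succ_div_mul_succ hp (mem_range.mp hk), ← mul_sum,
    sum_range_eq_one_sub_pow]
  simp

end binomialProb

lemma MeasureTheory.integral_comp_eq_sum_of_ae_mem {Ω α E : Type*} [MeasurableSpace Ω]
    [MeasurableSpace α] [MeasurableSingletonClass α] [NormedAddCommGroup E] [NormedSpace ℝ E]
    [CompleteSpace E] {μ : Measure Ω} [IsFiniteMeasure μ] {X : Ω → α} (hX : Measurable X)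
    (f : α → E) (s : Finset α) (hs : ∀ᵐ ω ∂μ, X ω ∈ s) :
    ∫ ω, f (X ω) ∂μ = ∑ i ∈ s, μ.real {ω | X ω = i} • f i := by
  have hmeas (i : α) : MeasurableSet {ω | X ω = i} := hX (measurableSet_singleton i)
  have hsum : (fun ω => f (X ω)) =ᵐ[μ] fun ω =>
      ∑ i ∈ s, Set.indicator {ω | X ω = i} (fun _ => f i) ω := by
    filter_upwards [hs] with ω hω
    refine .symm ((sum_eq_single_of_mem (X ω) hω fun j _ hj => ?_).trans ?_)
    · exact Set.indicator_of_notMem (Ne.symm hj) _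
    · exact Set.indicator_of_mem rfl _
  rw [integral_congr_ae hsum, integral_finsetSum s fun i _ =>
    (integrable_const (f i)).indicator (hmeas i)]
  exact sum_congr rfl fun i _ => integral_indicator_const (f i) (hmeas i)

theorem binomial_ratio_expectation_le_general {Ω : Type*} [MeasurableSpace Ω]
    (μ : Measure Ω) [IsProbabilityMeasure μ]
    (r : ℕ) (p : ℝ) (hp0 : 0 ≤ p) (hp1 : p < 1)
    (X : Ω → ℕ) (hXmeas : Measurable X)
    (hX : ∀ i : ℕ, μ {ω | X ω = i}
      = ENNReal.ofReal ((r.choose i : ℝ) * p ^ i * (1 - p) ^ (r - i))) :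
    ∫ ω, (X ω : ℝ) / ((r : ℝ) + 1 - (X ω : ℝ)) ∂μ ≤ p / (1 - p) := by
  have hX' (i : ℕ) : μ {ω | X ω = i} = ENNReal.ofReal (binomialProb r p i) := hX i
  have hbounded : ∀ᵐ ω ∂μ, X ω ∈ range (r + 1) := by
    refine ae_of_ae_map hXmeas.aemeasurable (ae_iff_of_countable.mpr fun i hi => ?_)
    rw [Measure.map_apply hXmeas (measurableSet_singleton i)] at hi
    by_contra hir
    apply hi
    change μ {ω | X ω = i} = 0
    rw [hX' i, binomialProb.eq_zero_of_lt (by simpa using hir), ENNReal.ofReal_zero]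
  rw [integral_comp_eq_sum_of_ae_mem hXmeas (fun i : ℕ => (i : ℝ) / (r + 1 - i)) _ hbounded]
  calc ∑ i ∈ range (r + 1), μ.real {ω | X ω = i} • ((i : ℝ) / (r + 1 - i))
      = ∑ i ∈ range (r + 1), (i : ℝ) / (r + 1 - i) * binomialProb r p i := by
        refine sum_congr rfl fun i _ => ?_
        rw [measureReal_def, hX' i,
          ENNReal.toReal_ofReal (binomialProb.nonneg hp0 hp1.le i), smul_eq_mul, mul_comm]
    _ = p / (1 - p) * (1 - p ^ r) := binomialProb.sum_div_mul hp1.ne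
    _ ≤ p / (1 - p) :=
        mul_le_of_le_one_right (div_nonneg hp0 (sub_nonneg.mpr hp1.le))
          (sub_le_self 1 (pow_nonneg hp0 r))

/-- If `X ~ Binomial(r, p)` with `r ≥ 1` and `0 ≤ p < 1`, then
`E[X / (r + 1 - X)] ≤ p / (1 - p)`. -/
theorem binomial_ratio_expectation_le {Ω : Type*} [MeasurableSpace Ω]
    (μ : Measure Ω) [IsProbabilityMeasure μ]
    (r : ℕ) (hr : 0 < r) (p : ℝ) (hp0 : 0 ≤ p) (hp1 : p < 1)
    (X : Ω → ℕ) (hXmeas : Measurable X)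
    (hX : ∀ i : ℕ, μ {ω | X ω = i}
      = ENNReal.ofReal ((r.choose i : ℝ) * p ^ i * (1 - p) ^ (r - i))) :
    ∫ ω, (X ω : ℝ) / ((r : ℝ) + 1 - (X ω : ℝ)) ∂μ ≤ p / (1 - p) :=
  binomial_ratio_expectation_le_general μ r p hp0 hp1 X hXmeas hX
end

section
/- Let $m \ge 1$ be an integer and let $v^+, v^- \ge 0$ be integers with $v^+ + v^- \le m$. Then, as an inequality of real numbers, $\frac{v^+ - 1}{1 + v^-} \cdot \frac{v^+}{m} + \frac{v^+}{\max(v^-, 1)} \cdot \frac{v^-}{m} + \frac{v^+}{1 + v^-} \cdot \left(1 - \frac{v^+ + v^-}{m}\right) \le \frac{v^+}{1 + v^-}$. -/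
/-- The deterministic one-step supermartingale inequality for Adaptive SeqStep:
for integers `m ≥ 1` and `v⁺, v⁻ ≥ 0` with `v⁺ + v⁻ ≤ m`,
`(v⁺-1)/(1+v⁻) · v⁺/m + v⁺/max(v⁻,1) · v⁻/m + v⁺/(1+v⁻) · (1 - (v⁺+v⁻)/m) ≤ v⁺/(1+v⁻)`. -/
theorem supermartingale_step_ineq (m vp vm : ℕ) (hm : 1 ≤ m) (h : vp + vm ≤ m) :
    ((vp : ℝ) - 1) / (1 + (vm : ℝ)) * ((vp : ℝ) / m)
      + (vp : ℝ) / (max (vm : ℝ) 1) * ((vm : ℝ) / m)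
      + (vp : ℝ) / (1 + (vm : ℝ)) * (1 - ((vp : ℝ) + (vm : ℝ)) / m)
    ≤ (vp : ℝ) / (1 + (vm : ℝ)) := by
  have hm' : (0 : ℝ) < m := by exact_mod_cast hm
  rcases Nat.eq_zero_or_pos vm with hv | hv
  · subst hv
    simp only [Nat.cast_zero, add_zero, max_eq_right (le_refl (1:ℝ)), zero_div, mul_zero]
    have hvp : (0 : ℝ) ≤ vp := Nat.cast_nonneg vp
    have h2 : (0:ℝ) ≤ (vp:ℝ) / m := by positivity
    nlinarith [h2]
  · have hv' : (1 : ℝ) ≤ vm := by exact_mod_cast hv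
    rw [max_eq_left hv']
    have hvm : (0 : ℝ) < vm := by linarith
    have h1 : (0 : ℝ) < 1 + (vm : ℝ) := by linarith
    have key : ((vp : ℝ) - 1) / (1 + (vm : ℝ)) * ((vp : ℝ) / m)
      + (vp : ℝ) / (vm : ℝ) * ((vm : ℝ) / m)
      + (vp : ℝ) / (1 + (vm : ℝ)) * (1 - ((vp : ℝ) + (vm : ℝ)) / m)
      = (vp : ℝ) / (1 + (vm : ℝ)) := by
      field_simp
      ring
    rw [key]
end

section
/- Let $0 < s \le \lambda < 1$, let $p_1, \ldots, p_n$ be random p-values with null set $\mathcal{H}_0 \subset \{1,\ldots,n\}$, where the null p-values $\{p_i : i \in \mathcal{H}_0\}$ are i.i.d. and independent of the non-null p-values. For $k = 1, \ldots, n$ define $V^+(k) = \sum_{i \in \mathcal{H}_0, i \le k} I(p_i \le s)$, $V^-(k) = \sum_{i \in \mathcal{H}_0, i \le k} I(p_i > \lambda)$, $M(k) = \frac{V^+(k)}{1 + V^-(k)}$, and let $\mathcal{F}_k$ be the $\sigma$-field generated by the non-null p-values together with $V^+(k)$, $V^-(k)$, and the indicator pairs $\{(I(p_i \le s), I(p_i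 > \lambda)) : i > k\}$. Then $M$ is a supermartingale with respect to the backward filtration $\mathcal{F}_n \subset \mathcal{F}_{n-1} \subset \cdots \subset \mathcal{F}_1$: for every $k \ge 2$, $\mathbb{E}[M(k-1) \mid \mathcal{F}_k] \le M(k)$ almost surely. -/
/-!
Write `T` for the null indices up to `k` and `M₋ⱼ` for `M(k)` computed with the null `j` removed
from `H₀`. Then `M(k-1) = M₋ₖ` (and `M(k-1) = M(k)` when `k` is not null). Every `𝓕ₖ`-event is
invariant under swapping two coordinates in `T`, and the law of `(pᵢ)` is invariant under such
swaps because the null block is i.i.d. and independent of the rest; so `∫_A M₋ⱼ` does not depend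
on `j ∈ T`. Averaging over `T`, it suffices that `∑_{j ∈ T} M₋ⱼ ≤ |T| M(k)` pointwise: with
`a = V⁺(k)`, `b = V⁻(k)` the difference is `(b (a / b) - a) / (1 + b) ≤ 0`, because `s ≤ λ` makes
the events `pⱼ ≤ s` and `pⱼ > λ` disjoint. The whole argument is run for the coordinate process
on `Fin n → ℝ` under the law of `(pᵢ)`.
-/

open MeasureTheory ProbabilityTheory
open scoped Classical

noncomputable section

variable {Ω : Type*}

/-- `V⁺(k)`: number of null p-values among the first `k` that are at most `s`. -/
def Vplus (n : ℕ) (p : Fin n → Ω → ℝ) (H₀ : Finset (Fin n)) (s : ℝ) (k : ℕ) (ω : Ω) : ℕ :=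
  (H₀.filter (fun i : Fin n => (i : ℕ) + 1 ≤ k ∧ p i ω ≤ s)).card

/-- `V⁻(k)`: number of null p-values among the first `k` that exceed `λ`. -/
def Vminus (n : ℕ) (p : Fin n → Ω → ℝ) (H₀ : Finset (Fin n)) (lam : ℝ) (k : ℕ) (ω : Ω) : ℕ :=
  (H₀.filter (fun i : Fin n => (i : ℕ) + 1 ≤ k ∧ lam < p i ω)).card

/-- The backward (super)martingale `M(k) = V⁺(k) / (1 + V⁻(k))`. -/
def Mproc (n : ℕ) (p : Fin n → Ω → ℝ) (H₀ : Finset (Fin n)) (s lam : ℝ) (k : ℕ) (ω : Ω) : ℝ :=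
  (Vplus n p H₀ s k ω : ℝ) / (1 + (Vminus n p H₀ lam k ω : ℝ))

/-- The backward filtration: `𝓕ₖ` is generated by the non-null p-values, the counts
`V⁺(k), V⁻(k)`, and the indicator pairs `(I(pᵢ ≤ s), I(pᵢ > λ))` for null `i > k`. -/
def Ffilt [MeasurableSpace Ω] (n : ℕ) (p : Fin n → Ω → ℝ) (H₀ : Finset (Fin n))
    (s lam : ℝ) (k : ℕ) : MeasurableSpace Ω :=
  (⨆ i ∈ (H₀ᶜ : Finset (Fin n)), MeasurableSpace.comap (p i) (borel ℝ))
  ⊔ MeasurableSpace.comap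
      (fun ω => (Vplus n p H₀ s k ω, Vminus n p H₀ lam k ω)) ⊤
  ⊔ (⨆ i ∈ H₀.filter (fun i : Fin n => k < (i : ℕ) + 1),
      MeasurableSpace.comap
        (fun ω => (decide (p i ω ≤ s), decide (lam < p i ω))) ⊤)

open Finset

theorem condExp_ae_le_of_forall_setIntegral_le {α : Type*} {m m0 : MeasurableSpace α}
    {μ : Measure α} (hm : m ≤ m0) [SigmaFinite (μ.trim hm)] {f g : α → ℝ}
    (hf : Integrable f μ) (hg : Integrable g μ) (hgm : StronglyMeasurable[m] g)
    (hfg : ∀ t, MeasurableSet[m] t → ∫ x in t, f x ∂μ ≤ ∫ x in t, g x ∂μ) :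
    μ[f|m] ≤ᵐ[μ] g := by
  refine ae_le_of_ae_le_trim (hm := hm) <| ae_le_of_forall_setIntegral_le
    (integrable_condExp.trim hm stronglyMeasurable_condExp) (hg.trim hm hgm) fun t ht _ => ?_
  rw [← setIntegral_trim hm stronglyMeasurable_condExp ht, ← setIntegral_trim hm hgm ht,
    setIntegral_condExp hm hf ht]
  exact hfg t ht

theorem comap_le_invariants {α γ : Type*} [MeasurableSpace α] {mγ : MeasurableSpace γ}
    {f : α → γ} {W : α → α} (hf : Measurable f) (hfW : f ∘ W = f) :
    mγ.comap f ≤ MeasurableSpace.invariants W := by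
  rintro _ ⟨t, ht, rfl⟩
  exact ⟨hf ht, by rw [← Set.preimage_comp, hfW]⟩

theorem comap_top_le_invariants {α γ : Type*} [MeasurableSpace α] [MeasurableSpace γ]
    [DiscreteMeasurableSpace γ] {f : α → γ} {W : α → α} (hf : Measurable f) (hfW : f ∘ W = f) :
    (⊤ : MeasurableSpace γ).comap f ≤ MeasurableSpace.invariants W :=
  (MeasurableSpace.comap_mono fun _ _ => .of_discrete).trans (comap_le_invariants hf hfW)

theorem Equiv.Perm.apply_mem_iff_of_forall_notMem {α : Type*} {σ : Equiv.Perm α} {S : Set α}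
    (hσ : ∀ i ∉ S, σ i = i) (i : α) : σ i ∈ S ↔ i ∈ S :=
  ⟨fun h => by_contra fun hi => hi (hσ i hi ▸ h),
    fun h => by_contra fun hi => hi ((σ.injective (hσ _ hi)).symm ▸ h)⟩

theorem Equiv.swap_apply_mem_erase_iff {α : Type*} [DecidableEq α] {T : Finset α} {i j : α}
    (hi : i ∈ T) (hj : j ∈ T) (l : α) : Equiv.swap i j l ∈ T.erase j ↔ l ∈ T.erase i := by
  rcases eq_or_ne l i with rfl | hli
  · simp
  rcases eq_or_ne l j with rfl | hlj
  · simp [hli, hi, hj, Ne.symm hli]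
  · simp [Equiv.swap_apply_of_ne_of_ne hli hlj, hli, hlj]

theorem Equiv.swap_apply_of_notMem {α : Type*} [DecidableEq α] {S : Finset α} {a b x : α}
    (ha : a ∈ S) (hb : b ∈ S) (hx : x ∉ S) : Equiv.swap a b x = x :=
  Equiv.swap_apply_of_ne_of_ne (ne_of_mem_of_not_mem ha hx).symm (ne_of_mem_of_not_mem hb hx).symm

theorem identDistrib_comp_perm {ι β : Type*} [Fintype ι] [MeasurableSpace β] [MeasurableSpace Ω]
    {μ : Measure Ω} [IsFiniteMeasure μ] {X : ι → Ω → β} {S : Finset ι}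
    (hX : ∀ i, Measurable (X i))
    (hiid : iIndepFun (fun i : {i // i ∈ S} => X i) μ)
    (hident : ∀ i ∈ S, ∀ j ∈ S, IdentDistrib (X i) (X j) μ μ)
    (hindep : IndepFun (fun ω (i : {i // i ∈ S}) => X i ω) (fun ω (i : {i // i ∉ S}) => X i ω) μ)
    {σ : Equiv.Perm ι} (hσ : ∀ i ∉ S, σ i = i) :
    IdentDistrib (fun ω i => X (σ i) ω) (fun ω i => X i ω) μ μ := by
  have hσS : ∀ i, σ i ∈ S ↔ i ∈ S := σ.apply_mem_iff_of_forall_notMem (S := (S : Set ι)) hσ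
  set τ : Equiv.Perm {i // i ∈ S} := σ.subtypePerm hσS
  have hnull : IdentDistrib (fun ω (i : {i // i ∈ S}) => X (τ i) ω)
      (fun ω (i : {i // i ∈ S}) => X i ω) μ μ :=
    IdentDistrib.pi (fun i => hident _ ((hσS i).2 i.2) i i.2)
      ((iIndepFun_precomp_of_bijective τ.bijective).2 hiid) hiid
  have hrest : IdentDistrib (fun ω (i : {i // i ∉ S}) => X i ω)
      (fun ω (i : {i // i ∉ S}) => X i ω) μ μ :=
    .refl (measurable_pi_lambda (fun ω (i : {i // i ∉ S}) => X i ω) fun i => hX i).aemeasurable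
  have hindep' : IndepFun (fun ω (i : {i // i ∈ S}) => X (τ i) ω)
      (fun ω (i : {i // i ∉ S}) => X i ω) μ :=
    hindep.comp (measurable_pi_lambda _ fun i => measurable_pi_apply (τ i)) measurable_id
  convert (hnull.prodMk hrest hindep' hindep).comp
    (MeasurableEquiv.piEquivPiSubtypeProd (fun _ : ι => β) (· ∈ S)).symm.measurable using 1 <;>
    funext ω i <;> by_cases hi : i ∈ S <;> simp [hi, hσ, τ]

theorem map_comp_perm_eq {ι β : Type*} [Fintype ι] [MeasurableSpace β] [MeasurableSpace Ω]
    {μ : Measure Ω} [IsFiniteMeasure μ] {X : ι → Ω → β} {S : Finset ι}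
    (hX : ∀ i, Measurable (X i))
    (hiid : iIndepFun (fun i : {i // i ∈ S} => X i) μ)
    (hident : ∀ i ∈ S, ∀ j ∈ S, IdentDistrib (X i) (X j) μ μ)
    (hindep : IndepFun (fun ω (i : {i // i ∈ S}) => X i ω) (fun ω (i : {i // i ∉ S}) => X i ω) μ)
    {σ : Equiv.Perm ι} (hσ : ∀ i ∉ S, σ i = i) :
    (μ.map fun ω i => X i ω).map (fun x => x ∘ σ) = μ.map fun ω i => X i ω := by
  rw [Measure.map_map (measurable_pi_lambda (fun x : ι → β => x ∘ σ)
    fun i => measurable_pi_apply _) (measurable_pi_lambda _ hX)]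
  exact (identDistrib_comp_perm hX hiid hident hindep hσ).map_eq

section Counting

variable {n : ℕ}

def nullsUpTo (H₀ : Finset (Fin n)) (k : ℕ) : Finset (Fin n) :=
  H₀.filter fun i => (i : ℕ) + 1 ≤ k

theorem nullsUpTo_erase (H₀ : Finset (Fin n)) (i : Fin n) (k : ℕ) :
    nullsUpTo (H₀.erase i) k = (nullsUpTo H₀ k).erase i :=
  filter_erase _ _ _

theorem nullsUpTo_erase_succ (H₀ : Finset (Fin n)) (i : Fin n) :
    nullsUpTo (H₀.erase i) (i + 1) = nullsUpTo H₀ i := by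
  ext j
  by_cases hj : j ∈ H₀
  · simp [nullsUpTo, hj, Fin.ext_iff]
    omega
  · simp [nullsUpTo, hj]

theorem Vplus_eq_card_filter (p : Fin n → Ω → ℝ) (H₀ : Finset (Fin n)) (s : ℝ) (k : ℕ) (ω : Ω) :
    Vplus n p H₀ s k ω = ((nullsUpTo H₀ k).filter fun i => p i ω ≤ s).card := by
  rw [Vplus, nullsUpTo, filter_filter]

theorem Vminus_eq_card_filter (p : Fin n → Ω → ℝ) (H₀ : Finset (Fin n)) (lam : ℝ) (k : ℕ)
    (ω : Ω) : Vminus n p H₀ lam k ω = ((nullsUpTo H₀ k).filter fun i => lam < p i ω).card := by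
  rw [Vminus, nullsUpTo, filter_filter]

section Perm

variable {H₁ H₂ : Finset (Fin n)} {k : ℕ} {σ : Equiv.Perm (Fin n)}

theorem Vplus_comp_perm (hσ : ∀ i, σ i ∈ nullsUpTo H₂ k ↔ i ∈ nullsUpTo H₁ k)
    (p : Fin n → Ω → ℝ) (s : ℝ) : Vplus n (fun i => p (σ i)) H₁ s k = Vplus n p H₂ s k := by
  funext ω
  rw [Vplus_eq_card_filter, Vplus_eq_card_filter]
  exact card_equiv σ fun i => by simp [hσ i]

theorem Vminus_comp_perm (hσ : ∀ i, σ i ∈ nullsUpTo H₂ k ↔ i ∈ nullsUpTo H₁ k)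
    (p : Fin n → Ω → ℝ) (lam : ℝ) :
    Vminus n (fun i => p (σ i)) H₁ lam k = Vminus n p H₂ lam k := by
  funext ω
  rw [Vminus_eq_card_filter, Vminus_eq_card_filter]
  exact card_equiv σ fun i => by simp [hσ i]

theorem Mproc_comp_perm (hσ : ∀ i, σ i ∈ nullsUpTo H₂ k ↔ i ∈ nullsUpTo H₁ k)
    (p : Fin n → Ω → ℝ) (s lam : ℝ) :
    Mproc n (fun i => p (σ i)) H₁ s lam k = Mproc n p H₂ s lam k := by
  funext ω
  simp only [Mproc, Vplus_comp_perm hσ, Vminus_comp_perm hσ]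

end Perm

theorem Mproc_erase_comp_swap {H₀ : Finset (Fin n)} {k : ℕ} {i j : Fin n}
    (hi : i ∈ nullsUpTo H₀ k) (hj : j ∈ nullsUpTo H₀ k) (p : Fin n → Ω → ℝ) (s lam : ℝ) :
    Mproc n (fun l => p (Equiv.swap i j l)) (H₀.erase i) s lam k
      = Mproc n p (H₀.erase j) s lam k :=
  Mproc_comp_perm (fun l => by
    rw [nullsUpTo_erase, nullsUpTo_erase]
    exact Equiv.swap_apply_mem_erase_iff hi hj l) p s lam

variable (p : Fin n → Ω → ℝ) (H₀ : Finset (Fin n)) (s lam : ℝ)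

theorem Vplus_erase_succ (i : Fin n) : Vplus n p (H₀.erase i) s (i + 1) = Vplus n p H₀ s i := by
  funext ω
  rw [Vplus_eq_card_filter, Vplus_eq_card_filter, nullsUpTo_erase_succ]

theorem Vminus_erase_succ (i : Fin n) :
    Vminus n p (H₀.erase i) lam (i + 1) = Vminus n p H₀ lam i := by
  funext ω
  rw [Vminus_eq_card_filter, Vminus_eq_card_filter, nullsUpTo_erase_succ]

theorem Mproc_erase_succ (i : Fin n) :
    Mproc n p (H₀.erase i) s lam (i + 1) = Mproc n p H₀ s lam i := by
  funext ω
  simp only [Mproc, Vplus_erase_succ, Vminus_erase_succ]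

variable {p H₀ s lam} {k : ℕ} {j : Fin n}

theorem Vplus_erase_add (hj : j ∈ nullsUpTo H₀ k) (ω : Ω) :
    (Vplus n p (H₀.erase j) s k ω : ℝ) + (if p j ω ≤ s then 1 else 0) = Vplus n p H₀ s k ω := by
  rw [Vplus_eq_card_filter, Vplus_eq_card_filter, nullsUpTo_erase, filter_erase]
  split_ifs with h
  · exact_mod_cast card_erase_add_one (mem_filter.2 ⟨hj, h⟩)
  · rw [erase_eq_of_notMem (by simp [h]), add_zero]

theorem Vminus_erase_add (hj : j ∈ nullsUpTo H₀ k) (ω : Ω) :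
    (Vminus n p (H₀.erase j) lam k ω : ℝ) + (if lam < p j ω then 1 else 0)
      = Vminus n p H₀ lam k ω := by
  rw [Vminus_eq_card_filter, Vminus_eq_card_filter, nullsUpTo_erase, filter_erase]
  split_ifs with h
  · exact_mod_cast card_erase_add_one (mem_filter.2 ⟨hj, h⟩)
  · rw [erase_eq_of_notMem (by simp [h]), add_zero]

theorem Mproc_erase_sub (hsl : s ≤ lam) (hj : j ∈ nullsUpTo H₀ k) (ω : Ω) :
    Mproc n p (H₀.erase j) s lam k ω - Mproc n p H₀ s lam k ω
      = ((if lam < p j ω then 1 else 0) * ((Vplus n p H₀ s k ω : ℝ) / Vminus n p H₀ lam k ω)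
          - if p j ω ≤ s then 1 else 0) / (1 + Vminus n p H₀ lam k ω) := by
  have hplus := Vplus_erase_add (p := p) (s := s) hj ω
  have hminus := Vminus_erase_add (p := p) (lam := lam) hj ω
  simp only [Mproc]
  set b := (Vminus n p (H₀.erase j) lam k ω : ℝ)
  have hb : 0 ≤ b := Nat.cast_nonneg _
  rw [← hplus, ← hminus]
  by_cases hs : p j ω ≤ s
  · have hl : ¬ lam < p j ω := not_lt.2 (hs.trans hsl)
    simp only [hs, hl, if_true, if_false, add_zero, zero_mul]
    field_simp
    ring
  · by_cases hl : lam < p j ω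
    · simp only [hs, hl, if_true, if_false, add_zero, one_mul, sub_zero]
      field_simp
      ring
    · simp [hs, hl]

theorem sum_Mproc_erase_le (hsl : s ≤ lam) (ω : Ω) :
    ∑ j ∈ nullsUpTo H₀ k, Mproc n p (H₀.erase j) s lam k ω
      ≤ (nullsUpTo H₀ k).card * Mproc n p H₀ s lam k ω := by
  set a := (Vplus n p H₀ s k ω : ℝ)
  set b := (Vminus n p H₀ lam k ω : ℝ)
  have hdiff : ∑ j ∈ nullsUpTo H₀ k, (Mproc n p (H₀.erase j) s lam k ω - Mproc n p H₀ s lam k ω)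
      = (b * (a / b) - a) / (1 + b) := by
    rw [sum_congr rfl fun j hj => Mproc_erase_sub hsl hj ω, ← sum_div, sum_sub_distrib,
      ← sum_mul, sum_boole, sum_boole, ← Vplus_eq_card_filter, ← Vminus_eq_card_filter]
  have hcancel : b * (a / b) ≤ a := by
    rcases eq_or_ne b 0 with hb | hb
    · simp [hb, a]
    · rw [mul_div_cancel₀ _ hb]
  have hle : (b * (a / b) - a) / (1 + b) ≤ 0 :=
    div_nonpos_of_nonpos_of_nonneg (by linarith) (by positivity)
  rw [sum_sub_distrib, sum_const, nsmul_eq_mul] at hdiff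
  linarith

end Counting

section Measurability

variable {n : ℕ} {p : Fin n → Ω → ℝ} (H₀ : Finset (Fin n)) (s lam : ℝ) (k : ℕ)

theorem Mproc_nonneg (ω : Ω) : 0 ≤ Mproc n p H₀ s lam k ω := by
  unfold Mproc
  positivity

theorem Mproc_le_card (ω : Ω) : Mproc n p H₀ s lam k ω ≤ H₀.card :=
  calc Mproc n p H₀ s lam k ω ≤ Vplus n p H₀ s k ω :=
        div_le_self (Nat.cast_nonneg _) (le_add_of_nonneg_right (Nat.cast_nonneg _))
    _ ≤ H₀.card := by exact_mod_cast card_filter_le _ _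

variable [MeasurableSpace Ω]

theorem measurable_Vplus (hp : ∀ i, Measurable (p i)) : Measurable (Vplus n p H₀ s k) := by
  unfold Vplus
  simp only [card_filter]
  refine Finset.measurable_sum _ fun i _ => Measurable.ite ?_ measurable_const measurable_const
  exact (MeasurableSet.const _).inter (measurableSet_le (hp i) measurable_const)

theorem measurable_Vminus (hp : ∀ i, Measurable (p i)) : Measurable (Vminus n p H₀ lam k) := by
  unfold Vminus
  simp only [card_filter]
  refine Finset.measurable_sum _ fun i _ => Measurable.ite ?_ measurable_const measurable_const
  exact (MeasurableSet.const _).inter (measurableSet_lt measurable_const (hp i))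

theorem integrable_Mproc {μ : Measure Ω} [IsFiniteMeasure μ] (hp : ∀ i, Measurable (p i)) :
    Integrable (Mproc n p H₀ s lam k) μ := by
  refine .of_bound ?_ H₀.card (.of_forall fun ω => ?_)
  · exact ((measurable_of_countable fun v : ℕ × ℕ => (v.1 : ℝ) / (1 + v.2)).comp
      ((measurable_Vplus H₀ s k hp).prodMk (measurable_Vminus H₀ lam k hp))).aestronglyMeasurable
  · rw [Real.norm_of_nonneg (Mproc_nonneg H₀ s lam k ω)]
    exact Mproc_le_card H₀ s lam k ω

end Measurability

section Filtration

variable {n : ℕ} (H₀ : Finset (Fin n)) (s lam : ℝ) (k : ℕ)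

theorem Ffilt_eq_comap [MeasurableSpace Ω] (p : Fin n → Ω → ℝ) :
    Ffilt n p H₀ s lam k
      = (Ffilt n (fun i (x : Fin n → ℝ) => x i) H₀ s lam k).comap fun ω i => p i ω := by
  simp only [Ffilt, MeasurableSpace.comap_sup, MeasurableSpace.comap_iSup,
    MeasurableSpace.comap_comp]
  rfl

theorem Ffilt_coord_le_invariants {σ : Equiv.Perm (Fin n)}
    (hσ : ∀ i ∉ nullsUpTo H₀ k, σ i = i) :
    Ffilt n (fun i (x : Fin n → ℝ) => x i) H₀ s lam k
      ≤ MeasurableSpace.invariants fun x => x ∘ σ := by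
  have hT : ∀ i, σ i ∈ nullsUpTo H₀ k ↔ i ∈ nullsUpTo H₀ k :=
    σ.apply_mem_iff_of_forall_notMem (S := ↑(nullsUpTo H₀ k)) hσ
  refine sup_le (sup_le ?_ ?_) ?_
  · refine iSup₂_le fun i hi => ?_
    have hiT : i ∉ nullsUpTo H₀ k := fun h => by simp_all [nullsUpTo]
    rw [← BorelSpace.measurable_eq]
    exact comap_le_invariants (measurable_pi_apply i) (funext fun x => by simp [hσ i hiT])
  · refine comap_top_le_invariants ((measurable_Vplus H₀ s k fun i => measurable_pi_apply i).prodMk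
      (measurable_Vminus H₀ lam k fun i => measurable_pi_apply i)) (funext fun x => ?_)
    exact Prod.ext (congrFun (Vplus_comp_perm hT (fun i (x : Fin n → ℝ) => x i) s) x)
      (congrFun (Vminus_comp_perm hT (fun i (x : Fin n → ℝ) => x i) lam) x)
  · refine iSup₂_le fun i hi => comap_top_le_invariants ?_ (funext fun x => ?_)
    · have hle : MeasurableSet ((fun x : Fin n → ℝ => decide (x i ≤ s)) ⁻¹' {true}) := by
        simpa only [Set.preimage, Set.mem_singleton_iff, decide_eq_true_eq] using
          measurableSet_le (measurable_pi_apply i) measurable_const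
      have hlt : MeasurableSet ((fun x : Fin n → ℝ => decide (lam < x i)) ⁻¹' {true}) := by
        simpa only [Set.preimage, Set.mem_singleton_iff, decide_eq_true_eq] using
          measurableSet_lt measurable_const (measurable_pi_apply i)
      exact (measurable_to_bool hle).prodMk (measurable_to_bool hlt)
    · have hiT : i ∉ nullsUpTo H₀ k := fun h => by simp_all [nullsUpTo]; omega
      simp [hσ i hiT]

theorem Ffilt_coord_le_pi :
    Ffilt n (fun i (x : Fin n → ℝ) => x i) H₀ s lam k ≤ MeasurableSpace.pi :=
  (Ffilt_coord_le_invariants H₀ s lam k (σ := 1) fun _ _ => rfl).trans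
    (MeasurableSpace.invariants_le _)

theorem measurable_Mproc_Ffilt [MeasurableSpace Ω] (p : Fin n → Ω → ℝ) :
    Measurable[Ffilt n p H₀ s lam k] (Mproc n p H₀ s lam k) := by
  have hV : Measurable[Ffilt n p H₀ s lam k, ⊤]
      fun ω => (Vplus n p H₀ s k ω, Vminus n p H₀ lam k ω) :=
    measurable_iff_comap_le.2 (le_sup_of_le_left le_sup_right)
  exact (measurable_from_top (f := fun v : ℕ × ℕ => (v.1 : ℝ) / (1 + v.2))).comp hV

end Filtration

theorem setIntegral_comp_of_map_eq {α : Type*} [MeasurableSpace α] {ν : Measure α} {W : α → α}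
    (hW : Measurable W) (hν : ν.map W = ν) {B : Set α} (hB : MeasurableSet B)
    (hWB : W ⁻¹' B = B) {f : α → ℝ} (hf : AEStronglyMeasurable f ν) :
    ∫ x in B, f (W x) ∂ν = ∫ x in B, f x ∂ν := by
  conv_rhs => rw [← hν]
  rw [setIntegral_map hB (hν.symm ▸ hf) hW.aemeasurable, hWB]

theorem setIntegral_Mproc_coord_le_succ {n : ℕ} {H₀ : Finset (Fin n)} {s lam : ℝ} (hsl : s ≤ lam)
    {ν : Measure (Fin n → ℝ)} [IsFiniteMeasure ν]
    (hν : ∀ a ∈ H₀, ∀ b ∈ H₀, ν.map (fun x => x ∘ Equiv.swap a b) = ν) (i : Fin n)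
    {B : Set (Fin n → ℝ)}
    (hB : MeasurableSet[Ffilt n (fun l (x : Fin n → ℝ) => x l) H₀ s lam (i + 1)] B) :
    ∫ x in B, Mproc n (fun l x => x l) H₀ s lam i x ∂ν
      ≤ ∫ x in B, Mproc n (fun l x => x l) H₀ s lam (i + 1) x ∂ν := by
  set M := fun (H : Finset (Fin n)) => Mproc n (fun l (x : Fin n → ℝ) => x l) H s lam (i + 1)
  set T := nullsUpTo H₀ (i + 1)
  have hcoord : ∀ l, Measurable fun x : Fin n → ℝ => x l := measurable_pi_apply
  rw [← Mproc_erase_succ]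
  by_cases hi : i ∈ H₀
  swap
  · rw [erase_eq_of_notMem hi]
  have hiT : i ∈ T := mem_filter.2 ⟨hi, le_rfl⟩
  have hswap : ∀ j ∈ T, ∫ x in B, M (H₀.erase j) x ∂ν = ∫ x in B, M (H₀.erase i) x ∂ν := by
    intro j hj
    obtain ⟨hBm, hBinv⟩ := Ffilt_coord_le_invariants H₀ s lam (i + 1)
      (fun l hl => Equiv.swap_apply_of_notMem hiT hj hl) B hB
    refine (setIntegral_congr_fun hBm fun x _ => ?_).trans (setIntegral_comp_of_map_eq
      (measurable_pi_lambda _ fun l => hcoord _) (hν i hi j (mem_filter.1 hj).1) hBm hBinv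
      (integrable_Mproc _ s lam _ hcoord).1)
    exact (congrFun (Mproc_erase_comp_swap hiT hj _ s lam) x).symm
  have hB' : MeasurableSet B := Ffilt_coord_le_pi H₀ s lam _ B hB
  have hT : (0 : ℝ) < T.card := by exact_mod_cast card_pos.2 ⟨i, hiT⟩
  refine le_of_mul_le_mul_left ?_ hT
  calc (T.card : ℝ) * ∫ x in B, M (H₀.erase i) x ∂ν
      = ∑ j ∈ T, ∫ x in B, M (H₀.erase j) x ∂ν := by
        rw [sum_congr rfl hswap, sum_const, nsmul_eq_mul]
    _ = ∫ x in B, ∑ j ∈ T, M (H₀.erase j) x ∂ν :=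
        (integral_finsetSum _ fun j _ => (integrable_Mproc _ s lam _ hcoord).integrableOn).symm
    _ ≤ ∫ x in B, T.card * M H₀ x ∂ν :=
        setIntegral_mono_on (integrable_finsetSum _ fun j _ =>
          (integrable_Mproc _ s lam _ hcoord)).integrableOn
          ((integrable_Mproc _ s lam _ hcoord).const_mul _).integrableOn hB'
          fun x _ => sum_Mproc_erase_le hsl x
    _ = T.card * ∫ x in B, M H₀ x ∂ν := integral_const_mul _ _

theorem Mproc_backward_supermartingale_general [MeasurableSpace Ω]
    (μ : Measure Ω) [IsProbabilityMeasure μ]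
    (n : ℕ) (p : Fin n → Ω → ℝ) (H₀ : Finset (Fin n))
    (hmeas : ∀ i, Measurable (p i))
    (hnulliid : iIndepFun
      (fun i : {i : Fin n // i ∈ H₀} => p i) μ)
    (hnullident : ∀ i ∈ H₀, ∀ j ∈ H₀, IdentDistrib (p i) (p j) μ μ)
    (hblockindep : IndepFun
      (fun ω => fun i : {i : Fin n // i ∈ H₀} => p i ω)
      (fun ω => fun i : {i : Fin n // i ∉ H₀} => p i ω) μ)
    (s lam : ℝ) (hsl : s ≤ lam) :
    ∀ k : ℕ, 2 ≤ k → k ≤ n →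
      ∀ᵐ ω ∂μ, (μ[Mproc n p H₀ s lam (k - 1) | Ffilt n p H₀ s lam k]) ω
        ≤ Mproc n p H₀ s lam k ω := by
  intro k _ hkn
  obtain ⟨i, rfl⟩ : ∃ i : Fin n, k = i + 1 := ⟨⟨k - 1, by omega⟩, by simp; omega⟩
  rw [Nat.add_sub_cancel]
  set P : Ω → Fin n → ℝ := fun ω l => p l ω
  have hP : Measurable P := measurable_pi_lambda _ hmeas
  have hF := Ffilt_eq_comap H₀ s lam (i + 1) p
  have hFle : Ffilt n p H₀ s lam (i + 1) ≤ ‹MeasurableSpace Ω› :=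
    hF ▸ (MeasurableSpace.comap_mono (Ffilt_coord_le_pi H₀ s lam _)).trans hP.comap_le
  refine condExp_ae_le_of_forall_setIntegral_le hFle (integrable_Mproc _ s lam _ hmeas)
    (integrable_Mproc _ s lam _ hmeas) (measurable_Mproc_Ffilt H₀ s lam _ p).stronglyMeasurable ?_
  rintro _ hA
  rw [hF] at hA
  obtain ⟨B, hB, rfl⟩ := hA
  have hexch : ∀ a ∈ H₀, ∀ b ∈ H₀, (μ.map P).map (fun x => x ∘ Equiv.swap a b) = μ.map P :=
    fun a ha b hb => map_comp_perm_eq hmeas hnulliid hnullident hblockindep fun l hl =>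
      Equiv.swap_apply_of_notMem ha hb hl
  have htransfer : ∀ k, ∫ ω in P ⁻¹' B, Mproc n p H₀ s lam k ω ∂μ
      = ∫ x in B, Mproc n (fun l x => x l) H₀ s lam k x ∂(μ.map P) := fun k =>
    (setIntegral_map (Ffilt_coord_le_pi H₀ s lam _ B hB)
      (integrable_Mproc _ s lam k measurable_pi_apply).1 hP.aemeasurable).symm
  rw [htransfer, htransfer]
  exact setIntegral_Mproc_coord_le_succ hsl hexch i hB

/-- **Backward supermartingale property for Adaptive SeqStep.** If the null p-values are
i.i.d. and independent of the non-null p-values, then `M(k) = V⁺(k)/(1 + V⁻(k))` is a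
supermartingale with respect to the backward filtration `𝓕ₙ ⊂ ⋯ ⊂ 𝓕₁`:
for `2 ≤ k ≤ n`, `E[M(k-1) ∣ 𝓕ₖ] ≤ M(k)` almost surely. -/
theorem Mproc_backward_supermartingale [MeasurableSpace Ω]
    (μ : Measure Ω) [IsProbabilityMeasure μ]
    (n : ℕ) (p : Fin n → Ω → ℝ) (H₀ : Finset (Fin n))
    (hmeas : ∀ i, Measurable (p i))
    (hrange : ∀ i ω, p i ω ∈ Set.Icc (0 : ℝ) 1)
    (hnulliid : iIndepFun
      (fun i : {i : Fin n // i ∈ H₀} => p i) μ)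
    (hnullident : ∀ i ∈ H₀, ∀ j ∈ H₀, IdentDistrib (p i) (p j) μ μ)
    (hblockindep : IndepFun
      (fun ω => fun i : {i : Fin n // i ∈ H₀} => p i ω)
      (fun ω => fun i : {i : Fin n // i ∉ H₀} => p i ω) μ)
    (s lam : ℝ) (hs : 0 < s) (hsl : s ≤ lam) (hlam : lam < 1) :
    ∀ k : ℕ, 2 ≤ k → k ≤ n →
      ∀ᵐ ω ∂μ, (μ[Mproc n p H₀ s lam (k - 1) | Ffilt n p H₀ s lam k]) ω
        ≤ Mproc n p H₀ s lam k ω :=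
  Mproc_backward_supermartingale_general μ n p H₀ hmeas hnulliid hnullident hblockindep s lam hsl

end
end

section
/- Let $F_1: [0,1] \to \mathbb{R}$ be strictly concave with $F_1(0) = 0$, $F_1(1) = 1$, let $s, \lambda \in (0,1)$, $q \in (0,1)$, and suppose $\frac{1-F_1(\lambda)}{1-\lambda} < 1$ (which holds by strict concavity). Define $\chi_{AS} = \frac{1-q}{1 - \frac{1-F_1(\lambda)}{1-\lambda} + q\left(\frac{F_1(s)}{s} - 1\right)}$ and $\chi_{AT} = \frac{1-q}{1 - \frac{1-F_1(\lambda)}{1-\lambda}}$. Then $\chi_{AS} < \chi_{AT}$. Consequently, for any nonincreasing function $\Pi: [0,1] \to [0,1]$, defining $t^*_{AS} = \max\{t : \Pi(t) \ge \chi_{AS}\}$ and $t^*_{AT} = \max\{t : \Pi(t) \ge \chi_{AT}\}$ (each taken as $0$ when the set is empty), one has $t^*_{AS} \ge t^*_{AT}$. -/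
/-- For a strictly concave non-null CDF `F₁` with `F₁(0)=0`, `F₁(1)=1`, thresholds
`s, λ ∈ (0,1)`, and level `q ∈ (0,1)`, the critical fraction of Adaptive SeqStep is strictly
smaller than that of the SeqStep accumulation test, and consequently for any nonincreasing
`Pic : [0,1] → [0,1]` the limiting stopping fraction of AS is at least that of AT. -/
theorem chiAS_lt_chiAT_and_tstar (F₁ : ℝ → ℝ)
    (hconc : StrictConcaveOn ℝ (Set.Icc (0 : ℝ) 1) F₁)
    (h0 : F₁ 0 = 0) (h1 : F₁ 1 = 1)
    (s lam q : ℝ) (hs : s ∈ Set.Ioo (0 : ℝ) 1) (hlam : lam ∈ Set.Ioo (0 : ℝ) 1)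
    (hq : q ∈ Set.Ioo (0 : ℝ) 1)
    (hchord : (1 - F₁ lam) / (1 - lam) < 1)
    (Pic : ℝ → ℝ) (hPicmap : ∀ t ∈ Set.Icc (0 : ℝ) 1, Pic t ∈ Set.Icc (0 : ℝ) 1)
    (hPicanti : AntitoneOn Pic (Set.Icc (0 : ℝ) 1)) :
    (1 - q) / (1 - (1 - F₁ lam) / (1 - lam) + q * (F₁ s / s - 1))
      < (1 - q) / (1 - (1 - F₁ lam) / (1 - lam)) ∧
    sSup {t : ℝ | t ∈ Set.Icc (0 : ℝ) 1 ∧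
        (1 - q) / (1 - (1 - F₁ lam) / (1 - lam)) ≤ Pic t}
      ≤ sSup {t : ℝ | t ∈ Set.Icc (0 : ℝ) 1 ∧
        (1 - q) / (1 - (1 - F₁ lam) / (1 - lam) + q * (F₁ s / s - 1)) ≤ Pic t} := by
  obtain ⟨hs0, hs1⟩ := hs
  obtain ⟨hq0, hq1⟩ := hq
  -- F₁ s > s from strict concavity
  have hFs : s < F₁ s := by
    have := hconc.2 (Set.left_mem_Icc.mpr one_pos.le)
      (Set.right_mem_Icc.mpr one_pos.le) (show (0:ℝ) ≠ 1 by norm_num)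
      (show (0:ℝ) < 1 - s by linarith) hs0 (by ring)
    simpa [h0, h1, smul_eq_mul] using this
  have hFss : 0 < F₁ s / s - 1 := by
    have : 1 < F₁ s / s := (one_lt_div hs0).mpr hFs
    linarith
  set c : ℝ := 1 - (1 - F₁ lam) / (1 - lam) with hc
  have hc0 : 0 < c := by simp only [hc]; linarith
  have hlt : (1 - q) / (c + q * (F₁ s / s - 1)) < (1 - q) / c := by
    apply div_lt_div_of_pos_left (by linarith) hc0
    nlinarith
  refine ⟨hlt, ?_⟩
  set A := {t : ℝ | t ∈ Set.Icc (0 : ℝ) 1 ∧ (1 - q) / c ≤ Pic t} with hA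
  set B := {t : ℝ | t ∈ Set.Icc (0 : ℝ) 1 ∧
      (1 - q) / (c + q * (F₁ s / s - 1)) ≤ Pic t} with hB
  have hsub : A ⊆ B := fun t ht => ⟨ht.1, le_trans hlt.le ht.2⟩
  have hBbdd : BddAbove B := ⟨1, fun t ht => ht.1.2⟩
  rcases Set.eq_empty_or_nonempty A with hAe | hAne
  · rw [hAe, Real.sSup_empty]
    rcases Set.eq_empty_or_nonempty B with hBe | ⟨t, ht⟩
    · rw [hBe, Real.sSup_empty]
    · exact le_trans ht.1.1 (le_csSup hBbdd ht)
  · exact csSup_le_csSup hBbdd hAne hsub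
end
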